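/- arXiv:1911.01322 — 2 statements merged into one kernel-verified Lean document; each statement's English description precedes it below -/
import Mathlib

section
/- Let l ≥ 1 and let M, K, L, a, b, d, e be positive reals with a ≤ e < b and n ≥ 1. Suppose z₁, …, z_l lie on the circle |z| = n^{−a}, and suppose ‖E(z₁)‖ ≤ M n^{d/2}, ‖E(z_l)^{-1}‖ ≤ M n^{d/2}, ‖C(z_i)‖ ≤ K for all i, and ‖E(z_i)^{-1}E(z_{i+1}) ‖ ≤ L n^{e−a} for 1 ≤ i ≤ l−1. Then with F(z) = E(z)C(z)E(z)^{-1}/(n^b z), one has ‖F(z₁)⋯F(z_l)‖ ≤ M² K^l L^{l−1} n^{a+d−e−(b−e)l}. -/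
/-!
Writing `F(z) = E(z) (s(z) C(z)) Einv(z)` with `s(z) = (n^b z)⁻¹`, the product of the `F(zᵢ)`
regroups into `E(z₀)`, the factors `s(zᵢ) C(zᵢ) (Einv(zᵢ) E(zᵢ₊₁))`, and `s(z_{l-1}) C(z_{l-1})
Einv(z_{l-1})`. Submultiplicativity then bounds each group separately, and `|s(zᵢ)| = n^{a-b}`.
-/

attribute [local instance] Matrix.linftyOpNormedRing Matrix.linftyOpNormedAlgebra

theorem List.prod_range_succ_map_mul_mul {A : Type*} [Monoid A] (E C E' : ℕ → A) (k : ℕ) :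
    ((List.range (k + 1)).map fun i => E i * C i * E' i).prod =
      E 0 * ((List.range k).map fun i => C i * (E' i * E (i + 1))).prod * (C k * E' k) := by
  induction k with
  | zero => simp [mul_assoc]
  | succ k ih =>
    rw [List.range_succ, List.map_append, List.prod_append, ih, List.range_succ]
    simp [mul_assoc]

theorem norm_mul_prod_map_le {A ι : Type*} [SeminormedRing A] (f : ι → A) {c : ℝ}
    (hc : 0 ≤ c) : ∀ (x : A) (l : List ι), (∀ i ∈ l, ‖f i‖ ≤ c) →
    ‖x * (l.map f).prod‖ ≤ ‖x‖ * c ^ l.length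
  | x, [], _ => by simp
  | x, i :: l, hf => by
    rw [List.map_cons, List.prod_cons, ← mul_assoc, List.length_cons, pow_succ', ← mul_assoc]
    calc ‖x * f i * (l.map f).prod‖ ≤ ‖x * f i‖ * c ^ l.length :=
          norm_mul_prod_map_le f hc _ l fun j hj => hf j (List.mem_cons_of_mem i hj)
      _ ≤ ‖x‖ * c * c ^ l.length := by
          gcongr
          exact norm_mul_le_of_le le_rfl (hf i List.mem_cons_self)

theorem norm_inv_ofReal_rpow_mul {n a : ℝ} (hn : 0 < n) (b : ℝ) {w : ℂ}
    (hw : ‖w‖ = n ^ (-a)) : ‖(((n ^ b : ℝ) : ℂ) * w)⁻¹‖ = n ^ (a - b) := by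
  rw [norm_inv, norm_mul, Complex.norm_real, Real.norm_of_nonneg (by positivity), hw,
    ← Real.rpow_add hn, ← Real.rpow_neg hn.le]
  ring_nf

theorem telescoped_bound_eq {n : ℝ} (hn : 0 < n) (M K L a b d e : ℝ) (k : ℕ) :
    M * n ^ (d / 2) * (n ^ (a - b) * K * (L * n ^ (e - a))) ^ k *
        (n ^ (a - b) * K * (M * n ^ (d / 2))) =
      M ^ 2 * K ^ (k + 1) * L ^ k * n ^ (a + d - e - (b - e) * ((k + 1 : ℕ) : ℝ)) := by
  have hexp : a + d - e - (b - e) * ((k + 1 : ℕ) : ℝ) =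
      d / 2 + (a - b + (e - a)) * k + (a - b) + d / 2 := by push_cast; ring
  rw [hexp, Real.rpow_add hn, Real.rpow_add hn, Real.rpow_add hn, Real.rpow_mul hn.le,
    Real.rpow_add hn, Real.rpow_natCast]
  ring

theorem stmt7_general {m : ℕ} (l : ℕ) (hl : 1 ≤ l)
    (M K L a b d e : ℝ) (hM : 0 < M) (hK : 0 < K) (hL : 0 < L)
    (n : ℝ) (hn : 1 ≤ n)
    (z : ℕ → ℂ) (hz : ∀ i < l, ‖z i‖ = n ^ (-a))
    (E C Einv : ℂ → Matrix (Fin m) (Fin m) ℂ)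
    (hE0 : ‖E (z 0)‖ ≤ M * n ^ (d / 2))
    (hEl : ‖Einv (z (l - 1))‖ ≤ M * n ^ (d / 2))
    (hC : ∀ i < l, ‖C (z i)‖ ≤ K)
    (hEE : ∀ i, i + 1 < l → ‖Einv (z i) * E (z (i + 1))‖ ≤ L * n ^ (e - a))
    (F : ℂ → Matrix (Fin m) (Fin m) ℂ)
    (hF : ∀ w, F w = (((n ^ b : ℝ) : ℂ) * w)⁻¹ • (E w * C w * Einv w)) :
    ‖((List.range l).map fun i => F (z i)).prod‖ ≤
      M ^ 2 * K ^ l * L ^ (l - 1) * n ^ (a + d - e - (b - e) * l) := by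
  have hn0 : 0 < n := by linarith
  obtain ⟨k, rfl⟩ : ∃ k, l = k + 1 := ⟨l - 1, by omega⟩
  rw [Nat.add_sub_cancel] at hEl ⊢
  set C' : ℕ → Matrix (Fin m) (Fin m) ℂ := fun i => (((n ^ b : ℝ) : ℂ) * z i)⁻¹ • C (z i)
  have hC' : ∀ i < k + 1, ‖C' i‖ ≤ n ^ (a - b) * K := by
    intro i hi
    rw [norm_smul, norm_inv_ofReal_rpow_mul hn0 b (hz i hi)]
    gcongr
    exact hC i hi
  have hFz : ∀ i, F (z i) = E (z i) * C' i * Einv (z i) := by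
    intro i
    simp only [hF, C', smul_mul_assoc, mul_smul_comm]
  simp only [hFz]
  rw [List.prod_range_succ_map_mul_mul (fun i => E (z i)) C' (fun i => Einv (z i))]
  calc _ ≤ ‖E (z 0) * ((List.range k).map fun i => C' i * (Einv (z i) * E (z (i + 1)))).prod‖ *
        ‖C' k * Einv (z k)‖ := norm_mul_le _ _
    _ ≤ M * n ^ (d / 2) * (n ^ (a - b) * K * (L * n ^ (e - a))) ^ k *
        (n ^ (a - b) * K * (M * n ^ (d / 2))) := by
      have hmiddle := norm_mul_prod_map_le (fun i => C' i * (Einv (z i) * E (z (i + 1))))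
        (c := n ^ (a - b) * K * (L * n ^ (e - a))) (by positivity) (E (z 0)) (List.range k)
        fun i hi => have := List.mem_range.mp hi
          norm_mul_le_of_le (hC' i (by omega)) (hEE i (by omega))
      rw [List.length_range] at hmiddle
      gcongr
      · exact hmiddle.trans (by gcongr)
      · exact norm_mul_le_of_le (hC' k (by omega)) hEl
    _ = _ := telescoped_bound_eq hn0 M K L a b d e k

/-- quantitative product bound. If `z₀, …, z_{l-1}` lie on the circle
`|z| = n^{-a}`, `‖E(z₀)‖ ≤ M n^{d/2}`, `‖Einv(z_{l-1})‖ ≤ M n^{d/2}`, `‖C(zᵢ)‖ ≤ K`,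
and `‖Einv(zᵢ) * E(z_{i+1})‖ ≤ L n^{e-a}`, then with
`F(z) = (n^b z)⁻¹ • (E z * C z * Einv z)` one has
`‖F(z₀)⋯F(z_{l-1})‖ ≤ M² K^l L^{l-1} n^{a+d-e-(b-e)l}`. -/
theorem stmt7 {m : ℕ} (l : ℕ) (hl : 1 ≤ l)
    (M K L a b d e : ℝ) (hM : 0 < M) (hK : 0 < K) (hL : 0 < L)
    (ha : 0 < a) (hae : a ≤ e) (heb : e < b) (hd : 0 < d)
    (n : ℝ) (hn : 1 ≤ n)
    (z : ℕ → ℂ) (hz : ∀ i < l, ‖z i‖ = n ^ (-a))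
    (E C Einv : ℂ → Matrix (Fin m) (Fin m) ℂ)
    (hEinv : ∀ w, E w * Einv w = 1) (hEinv' : ∀ w, Einv w * E w = 1)
    (hE0 : ‖E (z 0)‖ ≤ M * n ^ (d / 2))
    (hEl : ‖Einv (z (l - 1))‖ ≤ M * n ^ (d / 2))
    (hC : ∀ i < l, ‖C (z i)‖ ≤ K)
    (hEE : ∀ i, i + 1 < l → ‖Einv (z i) * E (z (i + 1))‖ ≤ L * n ^ (e - a))
    (F : ℂ → Matrix (Fin m) (Fin m) ℂ)
    (hF : ∀ w, F w = (((n ^ b : ℝ) : ℂ) * w)⁻¹ • (E w * C w * Einv w)) :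
    ‖((List.range l).map fun i => F (z i)).prod‖ ≤
      M ^ 2 * K ^ l * L ^ (l - 1) * n ^ (a + d - e - (b - e) * l) :=
  stmt7_general l hl M K L a b d e hM hK hL n hn z hz E C Einv hE0 hEl hC hEE F hF
end

section
/- Let f be a matrix-valued function analytic on an open neighborhood of the closed disc of radius R > 0 centered at 0, and suppose ‖f(s) − f(0)‖ ≤ A + B|s| for all s with |s| = R, where A, B ≥ 0. Then for any 0 < ρ < 1 and all z, w with |z|, |w| ≤ ρR, one has ‖f(w) − f(z)‖ ≤ |z − w| (A/R + B) / (1 − ρ)². -/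
attribute [local instance] Matrix.linftyOpNormedRing Matrix.linftyOpNormedAlgebra

/-!
Subtracting the Cauchy integral formulas for `f w` and `f z` on the circle `|s - c| = R` gives
`2πi (f w - f z) = ∮ ((s - w)⁻¹ - (s - z)⁻¹) f(s) ds`, and the kernel equals
`(w - z) / ((s - w)(s - z))`. When `z, w` lie in the disc of radius `r < R`, both factors of the
denominator have modulus at least `R - r` on the circle, so the standard estimate of a circle
integral gives `‖f w - f z‖ ≤ R M |w - z| / (R - r)²` with `M` a bound for `‖f‖` on the circle.
Applied to `f - f 0` with `M = A + B R` and `r = ρ R`, this is the claimed inequality.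
-/

open Metric Real Complex

variable {E : Type*} [NormedAddCommGroup E] [NormedSpace ℂ E]

lemma norm_inv_sub_inv_le {𝕜 : Type*} [NormedField 𝕜] {a b : 𝕜} {r : ℝ} (hr : 0 < r)
    (ha : r ≤ ‖a‖) (hb : r ≤ ‖b‖) : ‖a⁻¹ - b⁻¹‖ ≤ ‖b - a‖ / r ^ 2 := by
  have ha₀ : a ≠ 0 := norm_pos_iff.mp (hr.trans_le ha)
  have hb₀ : b ≠ 0 := norm_pos_iff.mp (hr.trans_le hb)
  rw [inv_sub_inv ha₀ hb₀, norm_div, norm_mul, sq]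
  gcongr

lemma circleIntegrable_sub_inv_smul {f : ℂ → E} {c w : ℂ} {R : ℝ} (hR : 0 ≤ R)
    (hf : ContinuousOn f (sphere c R)) (hw : w ∉ sphere c R) :
    CircleIntegrable (fun s => (s - w)⁻¹ • f s) c R := by
  refine ((continuous_sub_right w).continuousOn.inv₀ ?_).smul hf |>.circleIntegrable hR
  intro s hs hsw
  exact hw (by rwa [sub_eq_zero.mp hsw] at hs)

theorem DifferentiableOn.circleIntegral_sub_inv_sub_sub_inv_smul [CompleteSpace E]
    {f : ℂ → E} {c z w : ℂ} {R : ℝ} (hf : DifferentiableOn ℂ f (closedBall c R))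
    (hz : z ∈ ball c R) (hw : w ∈ ball c R) :
    (∮ s in C(c, R), ((s - w)⁻¹ - (s - z)⁻¹) • f s) = (2 * π * I : ℂ) • (f w - f z) := by
  have hR : 0 ≤ R := dist_nonneg.trans (mem_ball.mp hz).le
  have hcont : ContinuousOn f (sphere c R) := hf.continuousOn.mono sphere_subset_closedBall
  have not_mem_sphere {v : ℂ} (hv : v ∈ ball c R) : v ∉ sphere c R := fun hs =>
    (mem_ball.mp hv).ne (mem_sphere.mp hs)
  simp_rw [sub_smul]
  rw [circleIntegral.integral_sub (circleIntegrable_sub_inv_smul hR hcont (not_mem_sphere hw))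
    (circleIntegrable_sub_inv_smul hR hcont (not_mem_sphere hz)),
    hf.circleIntegral_sub_inv_smul hw, hf.circleIntegral_sub_inv_smul hz, smul_sub]

theorem DifferentiableOn.norm_sub_le_of_norm_le_on_sphere [CompleteSpace E]
    {f : ℂ → E} {c z w : ℂ} {R r M : ℝ} (hf : DifferentiableOn ℂ f (closedBall c R))
    (hM : ∀ s ∈ sphere c R, ‖f s‖ ≤ M) (hrR : r < R)
    (hz : z ∈ closedBall c r) (hw : w ∈ closedBall c r) :
    ‖f w - f z‖ ≤ R * M * ‖w - z‖ / (R - r) ^ 2 := by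
  have hR : 0 ≤ R := (dist_nonneg.trans (mem_closedBall.mp hz)).trans hrR.le
  have far_from_sphere {v : ℂ} (hv : v ∈ closedBall c r) (s : ℂ) (hs : s ∈ sphere c R) :
      R - r ≤ ‖s - v‖ := by
    have := dist_triangle s v c
    rw [mem_sphere.mp hs, dist_comm v c] at this
    rw [← dist_eq_norm]
    linarith [mem_closedBall'.mp hv]
  have hkernel : ∀ s ∈ sphere c R,
      ‖((s - w)⁻¹ - (s - z)⁻¹) • f s‖ ≤ ‖w - z‖ / (R - r) ^ 2 * M := fun s hs => by
    rw [norm_smul]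
    have hbound := norm_inv_sub_inv_le (sub_pos.mpr hrR)
      (far_from_sphere hw s hs) (far_from_sphere hz s hs)
    rw [sub_sub_sub_cancel_left] at hbound
    exact mul_le_mul hbound (hM s hs) (norm_nonneg _) (by positivity)
  have hintegral := circleIntegral.norm_integral_le_of_norm_le_const hR hkernel
  rw [hf.circleIntegral_sub_inv_sub_sub_inv_smul (closedBall_subset_ball hrR hz)
      (closedBall_subset_ball hrR hw), norm_smul,
    show ‖(2 * π * I : ℂ)‖ = 2 * π by simp [abs_of_pos pi_pos]] at hintegral
  calc ‖f w - f z‖ ≤ R * (‖w - z‖ / (R - r) ^ 2 * M) :=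
        le_of_mul_le_mul_left (hintegral.trans_eq (mul_assoc _ _ _)) two_pi_pos
    _ = R * M * ‖w - z‖ / (R - r) ^ 2 := by ring

theorem stmt11_general {m : ℕ} (R A B ρ : ℝ) (hR : 0 < R) (hρ1 : ρ < 1)
    (f : ℂ → Matrix (Fin m) (Fin m) ℂ)
    (U : Set ℂ) (hball : Metric.closedBall 0 R ⊆ U)
    (hf : DifferentiableOn ℂ f U)
    (hbound : ∀ s : ℂ, ‖s‖ = R → ‖f s - f 0‖ ≤ A + B * ‖s‖) :
    ∀ z w : ℂ, ‖z‖ ≤ ρ * R → ‖w‖ ≤ ρ * R →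
      ‖f w - f z‖ ≤ ‖z - w‖ * (A / R + B) / (1 - ρ) ^ 2 := by
  intro z w hz hw
  have hg : DifferentiableOn ℂ (fun s => f s - f 0) (closedBall 0 R) :=
    (hf.mono hball).sub_const _
  have hM : ∀ s ∈ sphere (0 : ℂ) R, ‖f s - f 0‖ ≤ A + B * R := fun s hs => by
    rw [mem_sphere_zero_iff_norm] at hs
    simpa [hs] using hbound s hs
  have key := hg.norm_sub_le_of_norm_le_on_sphere hM (mul_lt_of_lt_one_left hR hρ1)
    (mem_closedBall_zero_iff.mpr hz) (mem_closedBall_zero_iff.mpr hw)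
  rw [sub_sub_sub_cancel_right, norm_sub_rev w z] at key
  convert key using 1
  field_simp [(sub_pos.mpr hρ1).ne']

/-- Let `f` be a matrix-valued function analytic on an open neighborhood of
the closed disc of radius `R > 0` with `‖f s - f 0‖ ≤ A + B|s|` on the circle `|s| = R`.
Then for `0 < ρ < 1` and `|z|, |w| ≤ ρR`,
`‖f w - f z‖ ≤ |z - w| (A/R + B) / (1 - ρ)²`. -/
theorem stmt11 {m : ℕ} (R A B ρ : ℝ) (hR : 0 < R) (hA : 0 ≤ A) (hB : 0 ≤ B)
    (hρ0 : 0 < ρ) (hρ1 : ρ < 1)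
    (f : ℂ → Matrix (Fin m) (Fin m) ℂ)
    (U : Set ℂ) (hU : IsOpen U) (hball : Metric.closedBall 0 R ⊆ U)
    (hf : DifferentiableOn ℂ f U)
    (hbound : ∀ s : ℂ, ‖s‖ = R → ‖f s - f 0‖ ≤ A + B * ‖s‖) :
    ∀ z w : ℂ, ‖z‖ ≤ ρ * R → ‖w‖ ≤ ρ * R →
      ‖f w - f z‖ ≤ ‖z - w‖ * (A / R + B) / (1 - ρ) ^ 2 :=
  stmt11_general R A B ρ hR hρ1 f U hball hf hbound
end
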